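/- Fix α ≥ 0 and a positive integer n. Let u : [0,∞) → (ℤ/nℤ → [0,∞)) be a solution of the discrete scheme, i.e. for every x ∈ ℤ/nℤ the map t ↦ u_t(x) is differentiable with (d/dt) u_t(x) = Δ_n(φ_n ∘ u_t)(x) for all t ≥ 0. Set ū = max_{x ∈ ℤ/nℤ} u_0(x) and Ψ₀ = max_{x ∈ ℤ/nℤ} φ_n'(u_0(x))·|Δ_n(φ_n ∘ u_0)(x)|, and assume Ψ₀ > 0. Then, with T = 1 / ( 4·Ψ₀·(n^{−α} + ū) ), one has sup_{x ∈ ℤ/nℤ} sup_{0 ≤ s ≤ T} |(d/dt) u_s(x)| = sup_{x ∈ ℤ/nℤ} sup_{0 ≤ s ≤ T} |Δ_n(φ_n ∘ u_s)(x)| ≤ 2·(n^{−α} + ū)²·Ψ₀. -/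

import Mathlib

/-- `φ_n(u) = n^α φ(n^α u)` with `φ(ρ) = ρ/(1+ρ)`. -/
noncomputable def phin (α : ℝ) (n : ℕ) (u : ℝ) : ℝ :=
  (n : ℝ) ^ α * ((n : ℝ) ^ α * u / (1 + (n : ℝ) ^ α * u))

/-- The derivative `φ_n'(u) = (n^{−α} + u)^{−2}`. -/
noncomputable def phin' (α : ℝ) (n : ℕ) (u : ℝ) : ℝ :=
  (((n : ℝ) ^ (-α) + u) ^ 2)⁻¹

/-- The discrete Laplacian on `ℤ/nℤ`: `Δ_n f(x) = n² (f(x+1) + f(x−1) − 2 f(x))`. -/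
def discLap (n : ℕ) (f : ZMod n → ℝ) (x : ZMod n) : ℝ :=
  (n : ℝ) ^ 2 * (f (x + 1) + f (x - 1) - 2 * f x)

/-!
Write `q = n^{-α} + u`, `w = ∂ₜu = Δ_n(φ_n ∘ u)` and `v = φ_n'(u) w = ∂ₜ(φ_n ∘ u)`, so that
`w = q² v` and `∂ₜv = -2 q v² + φ_n'(u) Δ_n v`. The maximum principle on the finite set `ℤ/nℤ`
gives `u ≤ ū` (as `φ_n` is increasing) and `v ≤ Ψ₀` (the quadratic term is nonpositive). At a
minimum of `v`, `Δ_n v ≥ 0`, so `-v` is a subsolution of the Riccati equation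
`y' = 2 (n^{-α} + ū) y²` and stays below `Ψ₀ / (1 - 2 (n^{-α} + ū) Ψ₀ t)`, which is `2 Ψ₀` at time
`T`. Hence `|w| = q² |v| ≤ 2 (n^{-α} + ū)² Ψ₀`.

The maximum principle is Mathlib's fencing theorem applied to `t ↦ maxᵢ fᵢ(t)`, whose right Dini
derivative is at most the largest `fᵢ'(t)` over the indices attaining the maximum.
-/

open Set Filter Topology

theorem ContinuousOn.iSup_of_finite {X ι : Type*} [TopologicalSpace X] [Finite ι] [Nonempty ι]
    {f : ι → X → ℝ} {s : Set X} (hf : ∀ i, ContinuousOn (f i) s) :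
    ContinuousOn (fun t => ⨆ i, f i t) s := by
  have := Fintype.ofFinite ι
  simpa only [Finset.sup'_univ_eq_ciSup] using
    ContinuousOn.finset_sup'_apply Finset.univ_nonempty fun i _ => hf i

section FiniteFamily

variable {ι : Type*} [Finite ι] {f d : ι → ℝ → ℝ}

theorem eventually_slope_iSup_lt [Nonempty ι] {x r : ℝ}
    (hf : ∀ i, HasDerivWithinAt (f i) (d i x) (Ici x) x)
    (hr : ∀ i, (∀ j, f j x ≤ f i x) → d i x < r) :
    ∀ᶠ z in 𝓝[>] x, slope (fun t => ⨆ i, f i t) x z < r := by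
  set F := fun t => ⨆ i, f i t
  have hle : ∀ t i, f i t ≤ F t := fun t i =>
    le_ciSup (f := (f · t)) (finite_range _).bddAbove i
  have below : ∀ i, ∀ᶠ z in 𝓝[>] x, f i z < F x + r * (z - x) := by
    intro i
    by_cases hmax : ∀ j, f j x ≤ f i x
    · have hFi : F x = f i x := le_antisymm (ciSup_le hmax) (hle x i)
      have hslope := (hasDerivWithinAt_iff_tendsto_slope' (lt_irrefl x)).1 (hf i).Ioi_of_Ici
      filter_upwards [hslope.eventually_lt_const (hr i hmax), self_mem_nhdsWithin] with z hz hxz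
      rw [slope_def_field, div_lt_iff₀ (sub_pos.2 hxz)] at hz
      linarith
    · obtain ⟨j, hj⟩ : ∃ j, f i x < f j x := by simpa using hmax
      have hlim : Tendsto (fun z => f i z - r * (z - x)) (𝓝[>] x) (𝓝 (f i x - r * (x - x))) :=
        ((hf i).continuousWithinAt.mono Ioi_subset_Ici_self).sub
          (((continuous_id.sub continuous_const).const_mul r).continuousAt.continuousWithinAt)
      rw [sub_self, mul_zero, sub_zero] at hlim
      filter_upwards [hlim.eventually_lt_const (hj.trans_le (hle x j))] with z hz
      linarith
  filter_upwards [eventually_all.2 below, self_mem_nhdsWithin] with z hz hxz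
  obtain ⟨i, hi⟩ := exists_eq_ciSup_of_finite (f := fun i => f i z)
  rw [slope_def_field, div_lt_iff₀ (sub_pos.2 hxz)]
  have := hz i
  simp only [F] at this ⊢
  rw [← hi]
  linarith

theorem le_of_deriv_right_nonpos_at_max {a b C : ℝ}
    (hf : ∀ i, ∀ t ∈ Icc a b, HasDerivWithinAt (f i) (d i t) (Ici a) t)
    (hmax : ∀ t ∈ Ico a b, ∀ i, (∀ j, f j t ≤ f i t) → d i t ≤ 0)
    (ha : ∀ i, f i a ≤ C) :
    ∀ t ∈ Icc a b, ∀ i, f i t ≤ C := by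
  intro t ht i
  have : Nonempty ι := ⟨i⟩
  have hF := image_le_of_liminf_slope_right_le_deriv_boundary (f := fun t => ⨆ i, f i t)
    (ContinuousOn.iSup_of_finite fun i s hs =>
      (hf i s hs).continuousWithinAt.mono Icc_subset_Ici_self)
    (ciSup_le ha) continuousOn_const (fun _ _ => hasDerivWithinAt_const _ _ C)
    (fun s hs r hr => (eventually_slope_iSup_lt (fun i => (hf i s (Ico_subset_Icc_self hs)).mono
      (Ici_subset_Ici.2 hs.1)) fun i hi => (hmax s hs i hi).trans_lt hr).frequently) ht
  exact (le_ciSup (finite_range _).bddAbove i).trans hF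

theorem le_of_deriv_right_lt_deriv_boundary_at_max {a b : ℝ} {B B' : ℝ → ℝ}
    (hf : ∀ i, ∀ t ∈ Icc a b, HasDerivWithinAt (f i) (d i t) (Ici a) t)
    (hB : ∀ t ∈ Icc a b, HasDerivWithinAt B (B' t) (Ici a) t)
    (ha : ∀ i, f i a ≤ B a)
    (bound : ∀ t ∈ Ico a b, ∀ i, (∀ j, f j t ≤ f i t) → f i t = B t → d i t < B' t) :
    ∀ t ∈ Icc a b, ∀ i, f i t ≤ B t := by
  intro t ht i
  have : Nonempty ι := ⟨i⟩
  have hmaxd : ∀ s, ∃ i, (∀ j, f j s ≤ f i s) ∧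
      ∀ k, (∀ j, f j s ≤ f k s) → d k s ≤ d i s := by
    intro s
    have : Nonempty {i // ∀ j, f j s ≤ f i s} :=
      let ⟨i, hi⟩ := Finite.exists_max (f · s); ⟨⟨i, hi⟩⟩
    obtain ⟨⟨i, hi⟩, hdi⟩ := Finite.exists_max fun k : {i // ∀ j, f j s ≤ f i s} => d k s
    exact ⟨i, hi, fun k hk => hdi ⟨k, hk⟩⟩
  choose m hm_max hm_d using hmaxd
  have hF := image_le_of_liminf_slope_right_lt_deriv_boundary' (f := fun t => ⨆ i, f i t)
    (f' := fun s => d (m s) s)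
    (ContinuousOn.iSup_of_finite fun i s hs =>
      (hf i s hs).continuousWithinAt.mono Icc_subset_Ici_self)
    (fun s hs r hr => (eventually_slope_iSup_lt (fun i => (hf i s (Ico_subset_Icc_self hs)).mono
      (Ici_subset_Ici.2 hs.1)) fun k hk => (hm_d s k hk).trans_lt hr).frequently)
    (ciSup_le ha) (fun s hs => (hB s hs).continuousWithinAt.mono Icc_subset_Ici_self)
    (fun s hs => (hB s (Ico_subset_Icc_self hs)).mono (Ici_subset_Ici.2 hs.1))
    (fun s hs hFB => bound s hs (m s) (hm_max s) <|
      (le_antisymm (le_ciSup (finite_range _).bddAbove _) (ciSup_le (hm_max s))).trans hFB) ht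
  exact (le_ciSup (finite_range _).bddAbove i).trans hF

end FiniteFamily

theorem discLap_nonpos_of_forall_le {n : ℕ} {f : ZMod n → ℝ} {x : ZMod n} (h : ∀ y, f y ≤ f x) :
    discLap n f x ≤ 0 :=
  mul_nonpos_of_nonneg_of_nonpos (sq_nonneg _) (by linarith [h (x + 1), h (x - 1)])

theorem discLap_nonneg_of_forall_ge {n : ℕ} {f : ZMod n → ℝ} {x : ZMod n} (h : ∀ y, f x ≤ f y) :
    0 ≤ discLap n f x :=
  mul_nonneg (sq_nonneg _) (by linarith [h (x + 1), h (x - 1)])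

section Phin

variable {α : ℝ} {n : ℕ}

theorem phin_monotoneOn : MonotoneOn (phin α n) (Ici 0) := by
  intro a ha b _ hab
  have hc : (0 : ℝ) ≤ (n : ℝ) ^ α := by positivity
  have hca : 0 ≤ (n : ℝ) ^ α * a := mul_nonneg hc ha
  unfold phin
  gcongr ?_ * ?_
  rw [div_le_div_iff₀ (by positivity) (by nlinarith [mul_le_mul_of_nonneg_left hab hc])]
  nlinarith [mul_le_mul_of_nonneg_left hab hc]

theorem phin'_nonneg (r : ℝ) : 0 ≤ phin' α n r := by
  unfold phin'; positivity

theorem hasDerivAt_phin (hn : n ≠ 0) {r : ℝ} (hr : (n : ℝ) ^ (-α) + r ≠ 0) :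
    HasDerivAt (phin α n) (phin' α n r) r := by
  have hc : (0 : ℝ) < (n : ℝ) ^ α := by positivity
  have hinv : (n : ℝ) ^ (-α) = ((n : ℝ) ^ α)⁻¹ := Real.rpow_neg (Nat.cast_nonneg n) α
  have hden : 1 + (n : ℝ) ^ α * r ≠ 0 := by
    rw [hinv] at hr
    contrapose! hr
    field_simp
    linarith
  have hlin : HasDerivAt (fun u : ℝ => (n : ℝ) ^ α * u) ((n : ℝ) ^ α) r := by
    simpa using (hasDerivAt_id r).const_mul ((n : ℝ) ^ α)
  refine ((hlin.div (hlin.const_add 1) hden).const_mul ((n : ℝ) ^ α)).congr_deriv ?_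
  unfold phin'
  rw [hinv]
  field_simp
  ring

theorem hasDerivAt_phin' {r : ℝ} (hr : (n : ℝ) ^ (-α) + r ≠ 0) :
    HasDerivAt (phin' α n) (-2 * (((n : ℝ) ^ (-α) + r) ^ 3)⁻¹) r := by
  refine ((((hasDerivAt_id r).const_add ((n : ℝ) ^ (-α))).pow 2).inv
    (pow_ne_zero 2 hr)).congr_deriv ?_
  simp only [id, Pi.pow_apply]
  field_simp
  ring

end Phin

noncomputable def lapPhin (α : ℝ) (n : ℕ) (f : ZMod n → ℝ) (x : ZMod n) : ℝ :=
  discLap n (fun y => phin α n (f y)) x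

noncomputable def dtPhin (α : ℝ) (n : ℕ) (f : ZMod n → ℝ) (x : ZMod n) : ℝ :=
  phin' α n (f x) * lapPhin α n f x

theorem lapPhin_eq_sq_mul_dtPhin {α : ℝ} {n : ℕ} {f : ZMod n → ℝ} {x : ZMod n}
    (h : (n : ℝ) ^ (-α) + f x ≠ 0) :
    lapPhin α n f x = ((n : ℝ) ^ (-α) + f x) ^ 2 * dtPhin α n f x := by
  unfold dtPhin phin'
  field_simp

structure IsNonnegSolution (α : ℝ) (n : ℕ) (u : ℝ → ZMod n → ℝ) : Prop where
  nonneg : ∀ t, 0 ≤ t → ∀ x, 0 ≤ u t x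
  hasDerivWithinAt : ∀ t, 0 ≤ t → ∀ x,
    HasDerivWithinAt (fun s => u s x) (lapPhin α n (u t) x) (Ici 0) t

namespace IsNonnegSolution

variable {α : ℝ} {n : ℕ} [NeZero n] {u : ℝ → ZMod n → ℝ} {t : ℝ}

theorem rpow_neg_add_pos (hu : IsNonnegSolution α n u) (ht : 0 ≤ t) (x : ZMod n) :
    0 < (n : ℝ) ^ (-α) + u t x := by
  have : (0 : ℝ) < (n : ℝ) ^ (-α) :=
    Real.rpow_pos_of_pos (Nat.cast_pos.2 (Nat.pos_of_ne_zero (NeZero.ne n))) _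
  linarith [hu.nonneg t ht x]

theorem hasDerivWithinAt_phin_comp (hu : IsNonnegSolution α n u) (ht : 0 ≤ t) (x : ZMod n) :
    HasDerivWithinAt (fun s => phin α n (u s x)) (dtPhin α n (u t) x) (Ici 0) t :=
  HasDerivAt.comp_hasDerivWithinAt (h₂ := phin α n) t
    (hasDerivAt_phin (NeZero.ne n) (hu.rpow_neg_add_pos ht x).ne') (hu.hasDerivWithinAt t ht x)

theorem hasDerivWithinAt_lapPhin (hu : IsNonnegSolution α n u) (ht : 0 ≤ t) (x : ZMod n) :
    HasDerivWithinAt (fun s => lapPhin α n (u s) x) (discLap n (dtPhin α n (u t)) x)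
      (Ici 0) t := by
  have h := hu.hasDerivWithinAt_phin_comp ht
  exact (((h (x + 1)).add (h (x - 1))).sub ((h x).const_mul 2)).const_mul ((n : ℝ) ^ 2)

theorem hasDerivWithinAt_dtPhin (hu : IsNonnegSolution α n u) (ht : 0 ≤ t) (x : ZMod n) :
    HasDerivWithinAt (fun s => dtPhin α n (u s) x)
      (-2 * ((n : ℝ) ^ (-α) + u t x) * dtPhin α n (u t) x ^ 2
        + phin' α n (u t x) * discLap n (dtPhin α n (u t)) x) (Ici 0) t := by
  have hq := hu.rpow_neg_add_pos ht x
  have hφ' := HasDerivAt.comp_hasDerivWithinAt (h₂ := phin' α n) t (hasDerivAt_phin' hq.ne')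
    (hu.hasDerivWithinAt t ht x)
  refine (hφ'.mul (hu.hasDerivWithinAt_lapPhin ht x)).congr_deriv ?_
  rw [lapPhin_eq_sq_mul_dtPhin hq.ne', Function.comp_apply]
  field_simp

theorem abs_lapPhin_le (hu : IsNonnegSolution α n u) (ht : 0 ≤ t) {x : ZMod n} {M V : ℝ}
    (hM : (n : ℝ) ^ (-α) + u t x ≤ M) (hV : |dtPhin α n (u t) x| ≤ V) :
    |lapPhin α n (u t) x| ≤ M ^ 2 * V := by
  have hq := hu.rpow_neg_add_pos ht x
  rw [lapPhin_eq_sq_mul_dtPhin hq.ne', abs_mul, abs_of_nonneg (sq_nonneg _)]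
  gcongr

theorem le_of_initial_le (hu : IsNonnegSolution α n u) {C : ℝ} (h0 : ∀ x, u 0 x ≤ C)
    (ht : 0 ≤ t) (x : ZMod n) : u t x ≤ C :=
  le_of_deriv_right_nonpos_at_max (f := fun y s => u s y)
    (fun y s hs => hu.hasDerivWithinAt s hs.1 y)
    (fun s hs y hmax => discLap_nonpos_of_forall_le fun z =>
      phin_monotoneOn (hu.nonneg s hs.1 z) (hu.nonneg s hs.1 y) (hmax z))
    h0 t ⟨ht, le_rfl⟩ x

theorem dtPhin_le_of_initial_le (hu : IsNonnegSolution α n u) {C : ℝ}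
    (h0 : ∀ x, dtPhin α n (u 0) x ≤ C) (ht : 0 ≤ t) (x : ZMod n) : dtPhin α n (u t) x ≤ C :=
  le_of_deriv_right_nonpos_at_max (f := fun y s => dtPhin α n (u s) y)
    (fun y s hs => hu.hasDerivWithinAt_dtPhin hs.1 y)
    (fun s hs y hmax => add_nonpos
      (mul_nonpos_of_nonpos_of_nonneg (by linarith [hu.rpow_neg_add_pos hs.1 y]) (sq_nonneg _))
      (mul_nonpos_of_nonneg_of_nonpos (phin'_nonneg _) (discLap_nonpos_of_forall_le hmax)))
    h0 t ⟨ht, le_rfl⟩ x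

theorem neg_dtPhin_le_of_lt (hu : IsNonnegSolution α n u) {M K c : ℝ}
    (hM : ∀ t, 0 ≤ t → ∀ x, (n : ℝ) ^ (-α) + u t x ≤ M) (hK : 0 < K)
    (h0 : ∀ x, -dtPhin α n (u 0) x ≤ K) (hc : 2 * M * K < c) (ht : 0 ≤ t)
    (hct : c * t < 1) (x : ZMod n) : -dtPhin α n (u t) x ≤ K / (1 - c * t) := by
  have hM0 : 0 < M := (hu.rpow_neg_add_pos le_rfl 0).trans_le (hM 0 le_rfl 0)
  have hc0 : 0 < c := by nlinarith
  have hβ : ∀ s ∈ Icc 0 t, 0 < 1 - c * s := fun s hs => by nlinarith [hs.2]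
  refine le_of_deriv_right_lt_deriv_boundary_at_max (f := fun y s => -dtPhin α n (u s) y)
    (B := fun s => K / (1 - c * s)) (B' := fun s => K * c / (1 - c * s) ^ 2)
    (fun y s hs => (hu.hasDerivWithinAt_dtPhin hs.1 y).neg) (fun s hs => ?_)
    (fun y => by simpa using h0 y) (fun s hs y hmax hyB => ?_) t ⟨ht, le_rfl⟩ x
  · have hlin := ((hasDerivAt_id s).const_mul c).const_sub 1
    refine ((hlin.inv (hβ s hs).ne').const_mul K).hasDerivWithinAt.congr_deriv ?_
    simp only [id]
    field_simp
  · -- `-v` touches the barrier `K / β`; fencing needs `2 M (K / β)² < B'`, hence `c > 2 M K`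
    have hβs := hβ s (Ico_subset_Icc_self hs)
    have hv : dtPhin α n (u s) y = -(K / (1 - c * s)) := by linarith
    have hΔ : 0 ≤ phin' α n (u s y) * discLap n (dtPhin α n (u s)) y :=
      mul_nonneg (phin'_nonneg _) (discLap_nonneg_of_forall_ge fun z => neg_le_neg_iff.1 (hmax z))
    have hq := hM s hs.1 y
    set β := 1 - c * s
    rw [hv]
    calc -(-2 * ((n : ℝ) ^ (-α) + u s y) * (-(K / β)) ^ 2
          + phin' α n (u s y) * discLap n (dtPhin α n (u s)) y)
        ≤ 2 * M * (K / β) ^ 2 := by nlinarith [mul_le_mul_of_nonneg_right hq (sq_nonneg (K / β))]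
      _ = K * (2 * M * K) / β ^ 2 := by rw [div_pow]; ring
      _ < K * c / β ^ 2 := by gcongr

theorem neg_dtPhin_le (hu : IsNonnegSolution α n u) {M K : ℝ}
    (hM : ∀ t, 0 ≤ t → ∀ x, (n : ℝ) ^ (-α) + u t x ≤ M) (hK : 0 < K)
    (h0 : ∀ x, -dtPhin α n (u 0) x ≤ K) (ht : 0 ≤ t) (hMKt : 2 * M * K * t < 1)
    (x : ZMod n) : -dtPhin α n (u t) x ≤ K / (1 - 2 * M * K * t) := by
  have hlim : Tendsto (fun c => K / (1 - c * t)) (𝓝[>] (2 * M * K))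
      (𝓝 (K / (1 - 2 * M * K * t))) :=
    (continuousAt_const.div (continuousAt_const.sub (continuousAt_id.mul continuousAt_const))
      (sub_pos.2 hMKt).ne').tendsto.mono_left nhdsWithin_le_nhds
  have hsmall : ∀ᶠ c in 𝓝[>] (2 * M * K), c * t < 1 :=
    ((continuous_id.mul continuous_const).tendsto (2 * M * K)).eventually_lt_const hMKt
      |>.filter_mono nhdsWithin_le_nhds
  refine ge_of_tendsto hlim ?_
  filter_upwards [hsmall, self_mem_nhdsWithin] with c hct hc
  exact hu.neg_dtPhin_le_of_lt hM hK h0 hc ht hct x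

end IsNonnegSolution

theorem discrete_scheme_time_regularity_general
    (α : ℝ) (n : ℕ) [NeZero n]
    (u : ℝ → ZMod n → ℝ)
    (hpos : ∀ t, 0 ≤ t → ∀ x, 0 ≤ u t x)
    (hu : ∀ t, 0 ≤ t → ∀ x : ZMod n,
      HasDerivWithinAt (fun s => u s x)
        (discLap n (fun y => phin α n (u t y)) x) (Set.Ici 0) t)
    (ubar Ψ₀ T : ℝ)
    (hubar : ubar = ⨆ x : ZMod n, u 0 x)
    (hΨ₀ : Ψ₀ = ⨆ x : ZMod n, phin' α n (u 0 x) * |discLap n (fun y => phin α n (u 0 y)) x|)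
    (hΨpos : 0 < Ψ₀)
    (hT : T = 1 / (4 * Ψ₀ * ((n : ℝ) ^ (-α) + ubar))) :
    ∀ x : ZMod n, ∀ s, 0 ≤ s → s ≤ T →
      |discLap n (fun y => phin α n (u s y)) x| ≤ 2 * ((n : ℝ) ^ (-α) + ubar) ^ 2 * Ψ₀ := by
  intro x s hs0 hsT
  have hsol : IsNonnegSolution α n u := ⟨hpos, hu⟩
  have hu_le : ∀ t, 0 ≤ t → ∀ y, u t y ≤ ubar := fun t ht y =>
    hsol.le_of_initial_le (fun z => hubar ▸ le_ciSup (finite_range _).bddAbove z) ht y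
  have hv0 : ∀ y, |dtPhin α n (u 0) y| ≤ Ψ₀ := fun y => by
    rw [hΨ₀, dtPhin, abs_mul, abs_of_nonneg (phin'_nonneg _)]
    exact le_ciSup (f := fun z => phin' α n (u 0 z) * |lapPhin α n (u 0) z|)
      (finite_range _).bddAbove y
  set M := (n : ℝ) ^ (-α) + ubar
  have hq := hsol.rpow_neg_add_pos hs0 x
  have hqM : (n : ℝ) ^ (-α) + u s x ≤ M := by linarith [hu_le s hs0 x]
  have hMs : 2 * M * Ψ₀ * s ≤ 1 / 2 := by
    have hMT : 2 * M * Ψ₀ * T = 1 / 2 := by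
      rw [hT]
      field_simp [(hq.trans_le hqM).ne']
      ring
    nlinarith [mul_le_mul_of_nonneg_left hsT (by nlinarith : 0 ≤ 2 * M * Ψ₀)]
  have hv_le : dtPhin α n (u s) x ≤ Ψ₀ :=
    hsol.dtPhin_le_of_initial_le (fun y => (le_abs_self _).trans (hv0 y)) hs0 x
  have hv_ge : -dtPhin α n (u s) x ≤ 2 * Ψ₀ :=
    calc -dtPhin α n (u s) x ≤ Ψ₀ / (1 - 2 * M * Ψ₀ * s) :=
          hsol.neg_dtPhin_le (fun t ht y => by linarith [hu_le t ht y]) hΨpos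
            (fun y => (neg_le_abs _).trans (hv0 y)) hs0 (by linarith) x
      _ ≤ 2 * Ψ₀ := by rw [div_le_iff₀ (by linarith)]; nlinarith
  calc |lapPhin α n (u s) x| ≤ M ^ 2 * (2 * Ψ₀) :=
        hsol.abs_lapPhin_le hs0 hqM (abs_le.2 ⟨by linarith, by linarith⟩)
    _ = 2 * M ^ 2 * Ψ₀ := by ring

/-- time regularity: let `u` be a nonnegative solution of the discrete
scheme `(d/dt) u_t(x) = Δ_n(φ_n ∘ u_t)(x)` on `[0,∞)`, and set `ū = max_x u_0(x)` and
`Ψ₀ = max_x φ_n'(u_0(x)) |Δ_n(φ_n ∘ u_0)(x)| > 0`.  Then, with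
`T = 1/(4 Ψ₀ (n^{−α} + ū))`, for all `x` and all `0 ≤ s ≤ T`, the time derivative
`(d/dt) u_s(x) = Δ_n(φ_n ∘ u_s)(x)` is bounded in absolute value by
`2 (n^{−α} + ū)² Ψ₀`. -/
theorem discrete_scheme_time_regularity
    (α : ℝ) (hα : 0 ≤ α) (n : ℕ) [NeZero n]
    (u : ℝ → ZMod n → ℝ)
    (hpos : ∀ t, 0 ≤ t → ∀ x, 0 ≤ u t x)
    (hu : ∀ t, 0 ≤ t → ∀ x : ZMod n,
      HasDerivWithinAt (fun s => u s x)
        (discLap n (fun y => phin α n (u t y)) x) (Set.Ici 0) t)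
    (ubar Ψ₀ T : ℝ)
    (hubar : ubar = ⨆ x : ZMod n, u 0 x)
    (hΨ₀ : Ψ₀ = ⨆ x : ZMod n, phin' α n (u 0 x) * |discLap n (fun y => phin α n (u 0 y)) x|)
    (hΨpos : 0 < Ψ₀)
    (hT : T = 1 / (4 * Ψ₀ * ((n : ℝ) ^ (-α) + ubar))) :
    ∀ x : ZMod n, ∀ s, 0 ≤ s → s ≤ T →
      |discLap n (fun y => phin α n (u s y)) x| ≤ 2 * ((n : ℝ) ^ (-α) + ubar) ^ 2 * Ψ₀ :=
  discrete_scheme_time_regularity_general α n u hpos hu ubar Ψ₀ T hubar hΨ₀ hΨpos hT
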